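/- Let 0 < β < 1, ℓ > 0, R > 0, C₁, C₂, M > 0, and let N ≥ 1 satisfy R N^{−β} ≤ ℓ. Let ω_N, ω : ℝ³ → ℝ be measurable with 0 ≤ N ω_N(x) ≤ C₂/|x| and 0 ≤ ω(x) ≤ C₂/|x| for all x ≠ 0, ω_N(x) = ω(x) = 0 for |x| > ℓ, and |N ω_N(x) − ω(x)| ≤ C₁ N^{−(1−β)}/|x| for all x with |x| ≥ R N^{−β}. Let φ_N, φ ∈ L⁴(ℝ³; ℂ) ∩ L^∞(ℝ³; ℂ) with ‖φ_N‖_∞ ≤ M, ‖φ‖_∞ ≤ M and φ_N − φ ∈ L²(ℝ³). Define k_N(x,y) := N ω_N(x−y) φ_N((x+y)/2)² and k(x,y) := ω(x−y) φ((x+y)/2)². Then ‖k_N − k‖_{L²(ℝ³×ℝ³)}² ≤ 8πℓ C₁² N^{−2(1−β)} ‖φ_N‖₄⁴ + 32πR C₂² N^{−β} ‖φ_N‖₄⁴ + 32πℓ C₂² M² ‖φ_N − φ‖₂². -/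

import Mathlib

/-!
In the coordinates `u = x - y`, `z = (x + y) / 2`, which preserve Lebesgue measure, the kernel
difference is `(N ω_N(u) - ω(u)) φ_N(z)² + ω(u) (φ_N + φ)(z) (φ_N - φ)(z)`, so its squared `L²`
norm is at most twice a sum of products of a `u`-integral and a `z`-integral. Every `u`-integral
is controlled by `∫_{|u| ≤ r} |u|⁻² du = 4πr`, with the `C₁ N^{β-1} / |u|` bound for
`|u| ≥ R N^{-β}` and the `C₂ / |u|` bounds inside that ball; the `z`-integrals are `‖φ_N‖₄⁴` and
at most `4 M² ‖φ_N - φ‖₂²`.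
-/

open MeasureTheory Real
open scoped ENNReal

noncomputable section

abbrev E3 : Type := EuclideanSpace ℝ (Fin 3)

open Metric Set

section Measure

variable {α F : Type*} [MeasurableSpace α] {μ : Measure α} [NormedAddCommGroup F]

theorem lintegral_norm_add_sq_mul_norm_sub_sq_le {f g : α → F} {M : ℝ}
    (hf : ∀ᵐ x ∂μ, ‖f x‖ ≤ M) (hg : ∀ᵐ x ∂μ, ‖g x‖ ≤ M) :
    ∫⁻ x, ENNReal.ofReal (‖f x + g x‖ ^ 2 * ‖f x - g x‖ ^ 2) ∂μ
      ≤ ENNReal.ofReal ((2 * M) ^ 2) * ∫⁻ x, ENNReal.ofReal (‖f x - g x‖ ^ 2) ∂μ := by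
  rw [← lintegral_const_mul' _ _ ENNReal.ofReal_ne_top]
  refine lintegral_mono_ae ?_
  filter_upwards [hf, hg] with x hfx hgx
  rw [← ENNReal.ofReal_mul (by positivity)]
  gcongr
  exact (norm_add_le _ _).trans (by linarith)

theorem MeasureTheory.MemLp.lintegral_ofReal_norm_pow {f : α → F} {p : ℕ} (hf : MemLp f p μ)
    (hp : p ≠ 0) : ∫⁻ x, ENNReal.ofReal (‖f x‖ ^ p) ∂μ = ENNReal.ofReal (∫ x, ‖f x‖ ^ p ∂μ) :=
  (ofReal_integral_eq_lintegral_ofReal (hf.integrable_norm_pow hp)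
    (.of_forall fun _ => by positivity)).symm

end Measure

section Radial

variable {E : Type*} [NormedAddCommGroup E] [NormedSpace ℝ E] [FiniteDimensional ℝ E] [Nontrivial E]
  [MeasurableSpace E] [BorelSpace E] (μ : Measure E) [μ.IsAddHaarMeasure]

theorem lintegral_fun_norm_addHaar {f : ℝ → ℝ≥0∞} (hf : Measurable f) :
    ∫⁻ x, f ‖x‖ ∂μ = Module.finrank ℝ E * μ (ball 0 1)
      * ∫⁻ y in Ioi (0 : ℝ), ENNReal.ofReal (y ^ (Module.finrank ℝ E - 1)) * f y := by
  have hf' : Measurable fun y : Ioi (0 : ℝ) => f y := hf.comp measurable_subtype_coe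
  calc ∫⁻ x, f ‖x‖ ∂μ
      = ∫⁻ x : ({0}ᶜ : Set E), f ‖x.1‖ ∂(μ.comap (↑)) := by
        rw [lintegral_subtype_comap (measurableSet_singleton _).compl (fun x => f ‖x‖),
          restrict_compl_singleton]
    _ = ∫⁻ p : sphere (0 : E) 1 × Ioi (0 : ℝ), f p.2
          ∂(μ.toSphere.prod (Measure.volumeIoiPow (Module.finrank ℝ E - 1))) := by
        rw [← μ.measurePreserving_homeomorphUnitSphereProd.lintegral_comp_emb
          (Homeomorph.measurableEmbedding _) (fun p => f p.2)]
        simp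
    _ = _ := by
        rw [lintegral_prod (fun p : sphere (0 : E) 1 × Ioi (0 : ℝ) => f p.2)
            (hf'.comp measurable_snd).aemeasurable]
        simp only [lintegral_const]
        rw [Measure.toSphere_apply_univ, Measure.volumeIoiPow,
          lintegral_withDensity_eq_lintegral_mul _
            (measurable_subtype_coe.pow_const _).ennreal_ofReal hf',
          ← lintegral_subtype_comap measurableSet_Ioi (fun y => ENNReal.ofReal (y ^ _) * f y)]
        exact mul_comm _ _

end Radial

theorem lintegral_closedBall_div_norm_sq {r : ℝ} (hr : 0 ≤ r) (c : ℝ) :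
    ∫⁻ u in closedBall (0 : E3) r, ENNReal.ofReal (c / ‖u‖ ^ 2) = ENNReal.ofReal (4 * π * c * r) := by
  set F : ℝ → ℝ≥0∞ := (Iic r).indicator fun s => ENNReal.ofReal (c / s ^ 2)
  have hF : Measurable F :=
    (measurable_const.div (measurable_id.pow_const 2)).ennreal_ofReal.indicator measurableSet_Iic
  have hradial : ∀ u : E3,
      (closedBall 0 r).indicator (fun u => ENNReal.ofReal (c / ‖u‖ ^ 2)) u = F ‖u‖ := by
    intro u
    simp only [F, indicator, mem_closedBall_zero_iff, mem_Iic]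
  have hshell : ∫⁻ y in Ioi (0 : ℝ), ENNReal.ofReal (y ^ 2) * F y = ENNReal.ofReal (c * r) := by
    have hcancel : ∀ y ∈ Ioi (0 : ℝ),
        ENNReal.ofReal (y ^ 2) * F y = (Iic r).indicator (fun _ => ENNReal.ofReal c) y := by
      intro y (hy : 0 < y)
      by_cases hyr : y ≤ r
      · simp only [F, indicator_of_mem (mem_Iic.2 hyr)]
        rw [← ENNReal.ofReal_mul (by positivity), mul_div_cancel₀ _ (by positivity)]
      · simp [F, hyr]
    rw [setLIntegral_congr_fun measurableSet_Ioi hcancel, lintegral_indicator measurableSet_Iic,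
      Measure.restrict_restrict measurableSet_Iic, setLIntegral_const, inter_comm, Ioi_inter_Iic,
      Real.volume_Ioc, sub_zero, ENNReal.ofReal_mul' hr]
  rw [← lintegral_indicator measurableSet_closedBall, lintegral_congr hradial,
    lintegral_fun_norm_addHaar volume hF, finrank_euclideanSpace_fin, hshell,
    EuclideanSpace.volume_ball_fin_three, ENNReal.ofReal_one, one_pow, one_mul, ← ENNReal.ofReal_natCast,
    ← ENNReal.ofReal_mul (by positivity), ← ENNReal.ofReal_mul (by positivity)]
  congr 1
  push_cast
  ring

theorem lintegral_sq_le_of_abs_le_div_norm_two_scale {h : E3 → ℝ} {ℓ ρ K C : ℝ} (hℓ : 0 ≤ ℓ)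
    (hρ : 0 ≤ ρ) (hfar : ∀ x, x ≠ 0 → ρ ≤ ‖x‖ → |h x| ≤ K / ‖x‖)
    (hnear : ∀ x, x ≠ 0 → |h x| ≤ C / ‖x‖) (hout : ∀ x, ℓ < ‖x‖ → h x = 0) :
    ∫⁻ x, ENNReal.ofReal (h x ^ 2)
      ≤ ENNReal.ofReal (4 * π * K ^ 2 * ℓ) + ENNReal.ofReal (4 * π * C ^ 2 * ρ) := by
  have hpt : ∀ᵐ x : E3, ENNReal.ofReal (h x ^ 2)
      ≤ (closedBall 0 ℓ).indicator (fun x => ENNReal.ofReal (K ^ 2 / ‖x‖ ^ 2)) x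
        + (closedBall 0 ρ).indicator (fun x => ENNReal.ofReal (C ^ 2 / ‖x‖ ^ 2)) x := by
    filter_upwards [Measure.ae_ne volume 0] with x hx
    rcases lt_or_ge ℓ ‖x‖ with hxℓ | hxℓ
    · simp [hout x hxℓ]
    rcases le_or_gt ρ ‖x‖ with hxρ | hxρ
    · refine le_add_right ?_
      rw [indicator_of_mem (mem_closedBall_zero_iff.2 hxℓ), ← div_pow, ← sq_abs]
      gcongr
      exact hfar x hx hxρ
    · refine le_add_left ?_
      rw [indicator_of_mem (mem_closedBall_zero_iff.2 hxρ.le), ← div_pow, ← sq_abs]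
      gcongr
      exact hnear x hx
  calc ∫⁻ x, ENNReal.ofReal (h x ^ 2)
      ≤ (∫⁻ x in closedBall (0 : E3) ℓ, ENNReal.ofReal (K ^ 2 / ‖x‖ ^ 2))
        + ∫⁻ x in closedBall (0 : E3) ρ, ENNReal.ofReal (C ^ 2 / ‖x‖ ^ 2) := by
        rw [← lintegral_indicator measurableSet_closedBall,
          ← lintegral_indicator measurableSet_closedBall, ← lintegral_add_left]
        · exact lintegral_mono_ae hpt
        · exact (measurable_const.div (measurable_norm.pow_const 2)).ennreal_ofReal.indicator
            measurableSet_closedBall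
    _ = _ := by rw [lintegral_closedBall_div_norm_sq hℓ, lintegral_closedBall_div_norm_sq hρ]

theorem lintegral_sq_le_of_abs_le_div_norm {h : E3 → ℝ} {r K : ℝ} (hr : 0 ≤ r)
    (hK : ∀ x, x ≠ 0 → |h x| ≤ K / ‖x‖) (hout : ∀ x, r < ‖x‖ → h x = 0) :
    ∫⁻ x, ENNReal.ofReal (h x ^ 2) ≤ ENNReal.ofReal (4 * π * K ^ 2 * r) := by
  simpa using lintegral_sq_le_of_abs_le_div_norm_two_scale hr le_rfl (fun x hx _ => hK x hx) hK hout

section Kernel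

variable {E : Type*} [NormedAddCommGroup E] [NormedSpace ℝ E] [MeasurableSpace E] [BorelSpace E]
  [SecondCountableTopology E]

def diffMidpointEquiv : (E × E) ≃ᵐ (E × E) where
  toFun p := (p.1 - p.2, (2 : ℝ)⁻¹ • (p.1 + p.2))
  invFun q := (q.2 + (2 : ℝ)⁻¹ • q.1, q.2 - (2 : ℝ)⁻¹ • q.1)
  left_inv p := by ext <;> simp only <;> module
  right_inv q := by ext <;> simp only <;> module
  measurable_toFun := by
    change Measurable fun p : E × E => (p.1 - p.2, (2 : ℝ)⁻¹ • (p.1 + p.2))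
    fun_prop
  measurable_invFun := by
    change Measurable fun q : E × E => (q.2 + (2 : ℝ)⁻¹ • q.1, q.2 - (2 : ℝ)⁻¹ • q.1)
    fun_prop

theorem measurePreserving_diffMidpointEquiv (μ : Measure E) [SFinite μ] [μ.IsAddRightInvariant] :
    MeasurePreserving diffMidpointEquiv (μ.prod μ) (μ.prod μ) := by
  have shear : MeasurePreserving (fun q : E × E => (q.1, q.2 + (2 : ℝ)⁻¹ • q.1))
      (μ.prod μ) (μ.prod μ) :=
    (MeasurePreserving.id μ).skew_product (by fun_prop)
      (.of_forall fun a => (measurePreserving_add_right μ _).map_eq)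
  convert shear.comp (measurePreserving_sub_prod μ μ) using 1
  ext p
  · rfl
  · change (2 : ℝ)⁻¹ • (p.1 + p.2) = p.2 + (2 : ℝ)⁻¹ • (p.1 - p.2)
    module

def pairKernel (w : E → ℝ) (φ : E → ℂ) (p : E × E) : ℂ :=
  w (p.1 - p.2) * φ ((2 : ℝ)⁻¹ • (p.1 + p.2)) ^ 2

theorem norm_mul_sq_sub_mul_sq_sq_le (a b : ℝ) (w v : ℂ) :
    ‖(a : ℂ) * w ^ 2 - b * v ^ 2‖ ^ 2
      ≤ 2 * ((a - b) ^ 2 * ‖w‖ ^ 4) + 2 * (b ^ 2 * (‖w + v‖ ^ 2 * ‖w - v‖ ^ 2)) := by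
  have hsplit : (a : ℂ) * w ^ 2 - b * v ^ 2 = ((a - b : ℝ) : ℂ) * w ^ 2 + b * ((w + v) * (w - v)) := by
    push_cast
    ring
  have htri : ‖(a : ℂ) * w ^ 2 - b * v ^ 2‖ ≤ |a - b| * ‖w‖ ^ 2 + |b| * (‖w + v‖ * ‖w - v‖) := by
    rw [hsplit]
    refine (norm_add_le _ _).trans_eq ?_
    simp only [norm_mul, norm_pow, Complex.norm_real, Real.norm_eq_abs]
  calc ‖(a : ℂ) * w ^ 2 - b * v ^ 2‖ ^ 2
      ≤ (|a - b| * ‖w‖ ^ 2 + |b| * (‖w + v‖ * ‖w - v‖)) ^ 2 := by gcongr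
    _ ≤ 2 * ((|a - b| * ‖w‖ ^ 2) ^ 2 + (|b| * (‖w + v‖ * ‖w - v‖)) ^ 2) := add_sq_le
    _ = _ := by simp only [mul_pow, sq_abs]; ring

theorem lintegral_norm_pairKernel_sub_sq_le (μ : Measure E) [SFinite μ] [μ.IsAddRightInvariant]
    {a b : E → ℝ} (ha : Measurable a) (hb : Measurable b) {φN φ : E → ℂ}
    (hφN : AEMeasurable φN μ) (hφ : AEMeasurable φ μ) :
    ∫⁻ p, ENNReal.ofReal (‖pairKernel a φN p - pairKernel b φ p‖ ^ 2) ∂μ.prod μ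
      ≤ 2 * ((∫⁻ u, ENNReal.ofReal ((a u - b u) ^ 2) ∂μ) * ∫⁻ z, ENNReal.ofReal (‖φN z‖ ^ 4) ∂μ)
        + 2 * ((∫⁻ u, ENNReal.ofReal (b u ^ 2) ∂μ)
          * ∫⁻ z, ENNReal.ofReal (‖φN z + φ z‖ ^ 2 * ‖φN z - φ z‖ ^ 2) ∂μ) := by
  have hpt : ∀ q : E × E,
      ENNReal.ofReal (‖(a q.1 : ℂ) * φN q.2 ^ 2 - b q.1 * φ q.2 ^ 2‖ ^ 2)
        ≤ 2 * (ENNReal.ofReal ((a q.1 - b q.1) ^ 2) * ENNReal.ofReal (‖φN q.2‖ ^ 4))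
          + 2 * (ENNReal.ofReal (b q.1 ^ 2)
            * ENNReal.ofReal (‖φN q.2 + φ q.2‖ ^ 2 * ‖φN q.2 - φ q.2‖ ^ 2)) := by
    intro q
    refine (ENNReal.ofReal_le_ofReal (norm_mul_sq_sub_mul_sq_sq_le _ _ _ _)).trans_eq ?_
    simp (disch := positivity) only [ENNReal.ofReal_add, ENNReal.ofReal_mul, ENNReal.ofReal_ofNat]
  have hmeas : AEMeasurable (fun q : E × E => 2 * (ENNReal.ofReal ((a q.1 - b q.1) ^ 2)
      * ENNReal.ofReal (‖φN q.2‖ ^ 4))) (μ.prod μ) := by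
    have := hφN.comp_snd (μ := μ)
    fun_prop
  calc _ = ∫⁻ q, ENNReal.ofReal (‖(a q.1 : ℂ) * φN q.2 ^ 2 - b q.1 * φ q.2 ^ 2‖ ^ 2) ∂μ.prod μ :=
        (measurePreserving_diffMidpointEquiv μ).lintegral_comp_emb
          diffMidpointEquiv.measurableEmbedding
          (fun q => ENNReal.ofReal (‖(a q.1 : ℂ) * φN q.2 ^ 2 - b q.1 * φ q.2 ^ 2‖ ^ 2))
    _ ≤ _ := lintegral_mono hpt
    _ = _ := by
        rw [lintegral_add_left' hmeas, lintegral_const_mul' _ _ (by simp),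
          lintegral_const_mul' _ _ (by simp),
          lintegral_prod_mul (f := fun u => ENNReal.ofReal ((a u - b u) ^ 2))
            (g := fun z => ENNReal.ofReal (‖φN z‖ ^ 4)) (by fun_prop) (by fun_prop),
          lintegral_prod_mul (f := fun u => ENNReal.ofReal (b u ^ 2))
            (g := fun z => ENNReal.ofReal (‖φN z + φ z‖ ^ 2 * ‖φN z - φ z‖ ^ 2)) (by fun_prop)
            (by fun_prop)]

end Kernel

theorem stmt10 (β ℓ R C₁ C₂ M N : ℝ)
    (hℓ : 0 < ℓ) (hR : 0 < R) (hN : 1 ≤ N)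
    (ωN ω : E3 → ℝ) (hωNm : Measurable ωN) (hωm : Measurable ω)
    (hωN0 : ∀ x, 0 ≤ N * ωN x) (hω0 : ∀ x, 0 ≤ ω x)
    (hωNb : ∀ x : E3, x ≠ 0 → N * ωN x ≤ C₂ / ‖x‖)
    (hωb : ∀ x : E3, x ≠ 0 → ω x ≤ C₂ / ‖x‖)
    (hωNs : ∀ x : E3, ℓ < ‖x‖ → ωN x = 0) (hωs : ∀ x : E3, ℓ < ‖x‖ → ω x = 0)
    (hdiff : ∀ x : E3, R * N ^ (-β) ≤ ‖x‖ → |N * ωN x - ω x| ≤ C₁ * N ^ (-(1 - β)) / ‖x‖)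
    (φN φ : E3 → ℂ)
    (hφN4 : MemLp φN 4 (volume : Measure E3)) (hφ4 : MemLp φ 4 (volume : Measure E3))
    (hφNbdd : ∀ᵐ x : E3, ‖φN x‖ ≤ M) (hφbdd : ∀ᵐ x : E3, ‖φ x‖ ≤ M)
    (hφd : MemLp (fun x : E3 => φN x - φ x) 2 (volume : Measure E3)) :
    (∫⁻ p : E3 × E3, ENNReal.ofReal
        (‖((N * ωN (p.1 - p.2) : ℝ) : ℂ) * φN ((2 : ℝ)⁻¹ • (p.1 + p.2)) ^ 2
          - ((ω (p.1 - p.2) : ℝ) : ℂ) * φ ((2 : ℝ)⁻¹ • (p.1 + p.2)) ^ 2‖ ^ 2))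
      ≤ ENNReal.ofReal
        (8 * π * ℓ * C₁ ^ 2 * N ^ (-(2 * (1 - β))) * (∫ z : E3, ‖φN z‖ ^ 4)
          + 32 * π * R * C₂ ^ 2 * N ^ (-β) * (∫ z : E3, ‖φN z‖ ^ 4)
          + 32 * π * ℓ * C₂ ^ 2 * M ^ 2 * (∫ z : E3, ‖φN z - φ z‖ ^ 2)) := by
  have hN0 : 0 < N := one_pos.trans_le hN
  have hK : (C₁ * N ^ (-(1 - β))) ^ 2 = C₁ ^ 2 * N ^ (-(2 * (1 - β))) := by
    rw [mul_pow, ← Real.rpow_mul_natCast hN0.le]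
    ring_nf
  have hD := lintegral_sq_le_of_abs_le_div_norm_two_scale (h := fun x => N * ωN x - ω x)
    hℓ.le (by positivity) (fun x _ hx => hdiff x hx)
    (fun x hx => abs_sub_le_of_nonneg_of_le (hωN0 x) (hωNb x hx) (hω0 x) (hωb x hx))
    (fun x hx => by simp [hωNs x hx, hωs x hx])
  have hW := lintegral_sq_le_of_abs_le_div_norm (h := ω) hℓ.le
    (fun x hx => (abs_of_nonneg (hω0 x)).trans_le (hωb x hx)) hωs
  have hH := lintegral_norm_add_sq_mul_norm_sub_sq_le hφNbdd hφbdd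
  refine ((Measure.volume_eq_prod E3 E3).symm ▸ lintegral_norm_pairKernel_sub_sq_le volume
    (hωNm.const_mul N) hωm hφN4.1.aemeasurable hφ4.1.aemeasurable).trans ?_
  rw [MemLp.lintegral_ofReal_norm_pow (p := 2) (by exact_mod_cast hφd) two_ne_zero] at hH
  rw [MemLp.lintegral_ofReal_norm_pow (p := 4) (by exact_mod_cast hφN4) four_ne_zero]
  grw [hD, hW, hH]
  simp (disch := positivity) only [← ENNReal.ofReal_add, ← ENNReal.ofReal_mul,
    ← ENNReal.ofReal_ofNat]
  refine ENNReal.ofReal_le_ofReal ?_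
  -- `0 ≤ N ω_N, ω ≤ C₂ / |x|` gives `|N ω_N - ω| ≤ C₂ / |x|`, so the middle term has room to spare.
  have : 0 ≤ π * C₂ ^ 2 * (R * N ^ (-β)) * ∫ z : E3, ‖φN z‖ ^ 4 := by positivity
  rw [hK]
  nlinarith
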